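/- arXiv:0912.2971 — 3 statements merged into one kernel-verified Lean document; each statement's English description precedes it below -/
import Mathlib

section
/- The set f² = {αβ − αδγβ, ξε, γδ, βα + δγ + εξ} is a minimal set of generators of the ideal I: the two-sided ideal generated by f² equals I, and no proper subset of f² generates I. -/
/-!  The quiver `Q` of type `D₄`: vertices `1, 2, 3, 4` and arrows
`α : 1 → 4`, `β : 4 → 1`, `γ : 3 → 4`, `δ : 4 → 3`, `ε : 4 → 2`, `ξ : 2 → 4`.
The path algebra `KQ` is presented as the quotient of the free algebra on the
four vertex idempotents `e1, e2, e3, e4` and the six arrows, by the standard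
path-algebra relations (orthogonal idempotents summing to `1`, and each arrow
`a : v → w` satisfying `e_v * a = a = a * e_w`, paths being written from left
to right). -/

/-- Generators of the path algebra: the four vertices and the six arrows. -/
inductive QGen : Type
  | e1 | e2 | e3 | e4 | α | β | γ | δ | ε | ξ
  deriving DecidableEq

namespace PathAlgD4

open QGen

/-- The source vertex of each arrow. -/
def src : QGen → QGen
  | .α => .e1 | .β => .e4 | .γ => .e3 | .δ => .e4 | .ε => .e4 | .ξ => .e2
  | v => v

/-- The target vertex of each arrow. -/
def tgt : QGen → QGen
  | .α => .e4 | .β => .e1 | .γ => .e4 | .δ => .e3 | .ε => .e2 | .ξ => .e4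
  | v => v

/-- The generator `g` is a vertex. -/
def IsVertex (g : QGen) : Prop := g = .e1 ∨ g = .e2 ∨ g = .e3 ∨ g = .e4

/-- The generator `g` is an arrow. -/
def IsArrow (g : QGen) : Prop := g = .α ∨ g = .β ∨ g = .γ ∨ g = .δ ∨ g = .ε ∨ g = .ξ

variable (K : Type) [Field K]

/-- The defining relations of the path algebra of the quiver `Q`, as a quotient
of the free algebra on the vertices and arrows. -/
inductive PathRel : FreeAlgebra K QGen → FreeAlgebra K QGen → Prop
  | vertex_mul (v w : QGen) (hv : IsVertex v) (hw : IsVertex w) :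
      PathRel (FreeAlgebra.ι K v * FreeAlgebra.ι K w)
        (if v = w then FreeAlgebra.ι K v else 0)
  | vertex_sum :
      PathRel (FreeAlgebra.ι K .e1 + FreeAlgebra.ι K .e2 +
        FreeAlgebra.ι K .e3 + FreeAlgebra.ι K .e4) 1
  | src_mul (a : QGen) (ha : IsArrow a) :
      PathRel (FreeAlgebra.ι K (src a) * FreeAlgebra.ι K a) (FreeAlgebra.ι K a)
  | mul_tgt (a : QGen) (ha : IsArrow a) :
      PathRel (FreeAlgebra.ι K a * FreeAlgebra.ι K (tgt a)) (FreeAlgebra.ι K a)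
  | orth_mul (v a : QGen) (hv : IsVertex v) (ha : IsArrow a) (h : v ≠ src a) :
      PathRel (FreeAlgebra.ι K v * FreeAlgebra.ι K a) 0
  | mul_orth (a v : QGen) (ha : IsArrow a) (hv : IsVertex v) (h : v ≠ tgt a) :
      PathRel (FreeAlgebra.ι K a * FreeAlgebra.ι K v) 0

/-- The path algebra `KQ` of the quiver `Q` over `K`. -/
abbrev PathAlg : Type := RingQuot (PathRel K)

/-- The image in the path algebra `KQ` of a generator (vertex or arrow). -/
noncomputable def gen (g : QGen) : PathAlg K :=
  RingQuot.mkAlgHom K (PathRel K) (FreeAlgebra.ι K g)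


open PathAlgD4

/- ------------------------------------------------------------------ -/
/- Auxiliary material for the proof. -/

namespace F2Aux

open QGen

lemma isVertex_cases {v : QGen} (hv : IsVertex v) :
    v = .e1 ∨ v = .e2 ∨ v = .e3 ∨ v = .e4 := hv

lemma isArrow_cases {a : QGen} (ha : IsArrow a) :
    a = .α ∨ a = .β ∨ a = .γ ∨ a = .δ ∨ a = .ε ∨ a = .ξ := ha

variable (K : Type) [Field K]

/-- Projection onto the first two coordinates. -/
def P : Matrix (Fin 3) (Fin 3) K := !![1,0,0; 0,1,0; 0,0,0]
/-- Projection onto the last coordinate. -/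
def Q : Matrix (Fin 3) (Fin 3) K := !![0,0,0; 0,0,0; 0,0,1]
/-- Elementary matrix `E₁₃`. -/
def U : Matrix (Fin 3) (Fin 3) K := !![0,0,1; 0,0,0; 0,0,0]
/-- Elementary matrix `E₃₂`. -/
def V : Matrix (Fin 3) (Fin 3) K := !![0,0,0; 0,0,0; 0,1,0]

section MatrixFacts

@[simp] lemma PP : P K * P K = P K := by
  ext i j; fin_cases i <;> fin_cases j <;>
    simp [P, Matrix.mul_apply, Fin.sum_univ_three, Matrix.vecHead, Matrix.vecTail]
@[simp] lemma QQ : Q K * Q K = Q K := by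
  ext i j; fin_cases i <;> fin_cases j <;>
    simp [Q, Matrix.mul_apply, Fin.sum_univ_three, Matrix.vecHead, Matrix.vecTail]
@[simp] lemma PQ : P K * Q K = 0 := by
  ext i j; fin_cases i <;> fin_cases j <;>
    simp [P, Q, Matrix.mul_apply, Fin.sum_univ_three, Matrix.vecHead, Matrix.vecTail]
@[simp] lemma QP : Q K * P K = 0 := by
  ext i j; fin_cases i <;> fin_cases j <;>
    simp [P, Q, Matrix.mul_apply, Fin.sum_univ_three, Matrix.vecHead, Matrix.vecTail]
@[simp] lemma PaddQ : P K + Q K = 1 := by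
  ext i j; fin_cases i <;> fin_cases j <;>
    simp [P, Q, Matrix.one_apply, Matrix.vecHead, Matrix.vecTail]
@[simp] lemma QaddP : Q K + P K = 1 := by rw [add_comm]; exact PaddQ K
@[simp] lemma PU : P K * U K = U K := by
  ext i j; fin_cases i <;> fin_cases j <;>
    simp [P, U, Matrix.mul_apply, Fin.sum_univ_three, Matrix.vecHead, Matrix.vecTail]
@[simp] lemma UQ : U K * Q K = U K := by
  ext i j; fin_cases i <;> fin_cases j <;>
    simp [U, Q, Matrix.mul_apply, Fin.sum_univ_three, Matrix.vecHead, Matrix.vecTail]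
@[simp] lemma QV : Q K * V K = V K := by
  ext i j; fin_cases i <;> fin_cases j <;>
    simp [Q, V, Matrix.mul_apply, Fin.sum_univ_three, Matrix.vecHead, Matrix.vecTail]
@[simp] lemma VP : V K * P K = V K := by
  ext i j; fin_cases i <;> fin_cases j <;>
    simp [V, P, Matrix.mul_apply, Fin.sum_univ_three, Matrix.vecHead, Matrix.vecTail]
@[simp] lemma QU : Q K * U K = 0 := by
  ext i j; fin_cases i <;> fin_cases j <;>
    simp [Q, U, Matrix.mul_apply, Fin.sum_univ_three, Matrix.vecHead, Matrix.vecTail]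
@[simp] lemma UP : U K * P K = 0 := by
  ext i j; fin_cases i <;> fin_cases j <;>
    simp [U, P, Matrix.mul_apply, Fin.sum_univ_three, Matrix.vecHead, Matrix.vecTail]
@[simp] lemma PV : P K * V K = 0 := by
  ext i j; fin_cases i <;> fin_cases j <;>
    simp [P, V, Matrix.mul_apply, Fin.sum_univ_three, Matrix.vecHead, Matrix.vecTail]
@[simp] lemma VQ : V K * Q K = 0 := by
  ext i j; fin_cases i <;> fin_cases j <;>
    simp [V, Q, Matrix.mul_apply, Fin.sum_univ_three, Matrix.vecHead, Matrix.vecTail]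
@[simp] lemma VU : V K * U K = 0 := by
  ext i j; fin_cases i <;> fin_cases j <;>
    simp [V, U, Matrix.mul_apply, Fin.sum_univ_three, Matrix.vecHead, Matrix.vecTail]
lemma UVne : U K * V K ≠ 0 := by
  intro h
  have := congrFun (congrFun h 0) 1
  simp [U, V, Matrix.mul_apply, Fin.sum_univ_three, Matrix.vecHead, Matrix.vecTail] at this

end MatrixFacts

/-- Representation detecting `αβ - αδγβ`. -/
def m1 : QGen → Matrix (Fin 3) (Fin 3) K
  | .e1 => P K | .e2 => 0 | .e3 => 0 | .e4 => Q K
  | .α => U K | .β => V K | .γ => 0 | .δ => 0 | .ε => 0 | .ξ => 0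

/-- Representation detecting `ξε`. -/
def m2 : QGen → Matrix (Fin 3) (Fin 3) K
  | .e1 => 0 | .e2 => P K | .e3 => 0 | .e4 => Q K
  | .α => 0 | .β => 0 | .γ => 0 | .δ => 0 | .ε => V K | .ξ => U K

/-- Representation detecting `γδ`. -/
def m3 : QGen → Matrix (Fin 3) (Fin 3) K
  | .e1 => 0 | .e2 => 0 | .e3 => P K | .e4 => Q K
  | .α => 0 | .β => 0 | .γ => U K | .δ => V K | .ε => 0 | .ξ => 0

/-- Representation detecting `βα + δγ + εξ`. -/
def m4 : QGen → Matrix (Fin 3) (Fin 3) K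
  | .e1 => 0 | .e2 => 0 | .e3 => Q K | .e4 => P K
  | .α => 0 | .β => 0 | .γ => V K | .δ => U K | .ε => 0 | .ξ => 0

lemma hrel1 : ∀ ⦃p q⦄, PathRel K p q →
    FreeAlgebra.lift K (m1 K) p = FreeAlgebra.lift K (m1 K) q := by
  intro p q h
  induction h with
  | vertex_mul v w hv hw =>
      rcases isVertex_cases hv with rfl|rfl|rfl|rfl <;>
        rcases isVertex_cases hw with rfl|rfl|rfl|rfl <;>
        simp [m1, apply_ite]
  | vertex_sum => simp [m1]
  | src_mul a ha =>
      rcases isArrow_cases ha with rfl|rfl|rfl|rfl|rfl|rfl <;> simp [m1, src]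
  | mul_tgt a ha =>
      rcases isArrow_cases ha with rfl|rfl|rfl|rfl|rfl|rfl <;> simp [m1, tgt]
  | orth_mul v a hv ha h =>
      rcases isVertex_cases hv with rfl|rfl|rfl|rfl <;>
        rcases isArrow_cases ha with rfl|rfl|rfl|rfl|rfl|rfl <;>
        simp_all [m1, src]
  | mul_orth a v ha hv h =>
      rcases isVertex_cases hv with rfl|rfl|rfl|rfl <;>
        rcases isArrow_cases ha with rfl|rfl|rfl|rfl|rfl|rfl <;>
        simp_all [m1, tgt]

lemma hrel2 : ∀ ⦃p q⦄, PathRel K p q →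
    FreeAlgebra.lift K (m2 K) p = FreeAlgebra.lift K (m2 K) q := by
  intro p q h
  induction h with
  | vertex_mul v w hv hw =>
      rcases isVertex_cases hv with rfl|rfl|rfl|rfl <;>
        rcases isVertex_cases hw with rfl|rfl|rfl|rfl <;>
        simp [m2, apply_ite]
  | vertex_sum => simp [m2]
  | src_mul a ha =>
      rcases isArrow_cases ha with rfl|rfl|rfl|rfl|rfl|rfl <;> simp [m2, src]
  | mul_tgt a ha =>
      rcases isArrow_cases ha with rfl|rfl|rfl|rfl|rfl|rfl <;> simp [m2, tgt]
  | orth_mul v a hv ha h =>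
      rcases isVertex_cases hv with rfl|rfl|rfl|rfl <;>
        rcases isArrow_cases ha with rfl|rfl|rfl|rfl|rfl|rfl <;>
        simp_all [m2, src]
  | mul_orth a v ha hv h =>
      rcases isVertex_cases hv with rfl|rfl|rfl|rfl <;>
        rcases isArrow_cases ha with rfl|rfl|rfl|rfl|rfl|rfl <;>
        simp_all [m2, tgt]

lemma hrel3 : ∀ ⦃p q⦄, PathRel K p q →
    FreeAlgebra.lift K (m3 K) p = FreeAlgebra.lift K (m3 K) q := by
  intro p q h
  induction h with
  | vertex_mul v w hv hw =>
      rcases isVertex_cases hv with rfl|rfl|rfl|rfl <;>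
        rcases isVertex_cases hw with rfl|rfl|rfl|rfl <;>
        simp [m3, apply_ite]
  | vertex_sum => simp [m3]
  | src_mul a ha =>
      rcases isArrow_cases ha with rfl|rfl|rfl|rfl|rfl|rfl <;> simp [m3, src]
  | mul_tgt a ha =>
      rcases isArrow_cases ha with rfl|rfl|rfl|rfl|rfl|rfl <;> simp [m3, tgt]
  | orth_mul v a hv ha h =>
      rcases isVertex_cases hv with rfl|rfl|rfl|rfl <;>
        rcases isArrow_cases ha with rfl|rfl|rfl|rfl|rfl|rfl <;>
        simp_all [m3, src]
  | mul_orth a v ha hv h =>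
      rcases isVertex_cases hv with rfl|rfl|rfl|rfl <;>
        rcases isArrow_cases ha with rfl|rfl|rfl|rfl|rfl|rfl <;>
        simp_all [m3, tgt]

lemma hrel4 : ∀ ⦃p q⦄, PathRel K p q →
    FreeAlgebra.lift K (m4 K) p = FreeAlgebra.lift K (m4 K) q := by
  intro p q h
  induction h with
  | vertex_mul v w hv hw =>
      rcases isVertex_cases hv with rfl|rfl|rfl|rfl <;>
        rcases isVertex_cases hw with rfl|rfl|rfl|rfl <;>
        simp [m4, apply_ite]
  | vertex_sum => simp [m4]
  | src_mul a ha =>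
      rcases isArrow_cases ha with rfl|rfl|rfl|rfl|rfl|rfl <;> simp [m4, src]
  | mul_tgt a ha =>
      rcases isArrow_cases ha with rfl|rfl|rfl|rfl|rfl|rfl <;> simp [m4, tgt]
  | orth_mul v a hv ha h =>
      rcases isVertex_cases hv with rfl|rfl|rfl|rfl <;>
        rcases isArrow_cases ha with rfl|rfl|rfl|rfl|rfl|rfl <;>
        simp_all [m4, src]
  | mul_orth a v ha hv h =>
      rcases isVertex_cases hv with rfl|rfl|rfl|rfl <;>
        rcases isArrow_cases ha with rfl|rfl|rfl|rfl|rfl|rfl <;>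
        simp_all [m4, tgt]

/-- The algebra homomorphism induced by `m1`. -/
noncomputable def φ1 : PathAlg K →ₐ[K] Matrix (Fin 3) (Fin 3) K :=
  RingQuot.liftAlgHom K ⟨FreeAlgebra.lift K (m1 K), hrel1 K⟩
/-- The algebra homomorphism induced by `m2`. -/
noncomputable def φ2 : PathAlg K →ₐ[K] Matrix (Fin 3) (Fin 3) K :=
  RingQuot.liftAlgHom K ⟨FreeAlgebra.lift K (m2 K), hrel2 K⟩
/-- The algebra homomorphism induced by `m3`. -/
noncomputable def φ3 : PathAlg K →ₐ[K] Matrix (Fin 3) (Fin 3) K :=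
  RingQuot.liftAlgHom K ⟨FreeAlgebra.lift K (m3 K), hrel3 K⟩
/-- The algebra homomorphism induced by `m4`. -/
noncomputable def φ4 : PathAlg K →ₐ[K] Matrix (Fin 3) (Fin 3) K :=
  RingQuot.liftAlgHom K ⟨FreeAlgebra.lift K (m4 K), hrel4 K⟩

@[simp] lemma φ1_gen (g : QGen) : φ1 K (gen K g) = m1 K g := by
  rw [gen, φ1, RingQuot.liftAlgHom_mkAlgHom_apply, FreeAlgebra.lift_ι_apply]
@[simp] lemma φ2_gen (g : QGen) : φ2 K (gen K g) = m2 K g := by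
  rw [gen, φ2, RingQuot.liftAlgHom_mkAlgHom_apply, FreeAlgebra.lift_ι_apply]
@[simp] lemma φ3_gen (g : QGen) : φ3 K (gen K g) = m3 K g := by
  rw [gen, φ3, RingQuot.liftAlgHom_mkAlgHom_apply, FreeAlgebra.lift_ι_apply]
@[simp] lemma φ4_gen (g : QGen) : φ4 K (gen K g) = m4 K g := by
  rw [gen, φ4, RingQuot.liftAlgHom_mkAlgHom_apply, FreeAlgebra.lift_ι_apply]

/-- Everything in the span of a set annihilated by a ring homomorphism is
annihilated by it. -/
lemma span_eval_zero {R S F : Type*} [Ring R] [Ring S] [FunLike F R S]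
    [RingHomClass F R S] (φ : F) {s : Set R} (h : ∀ y ∈ s, φ y = 0) {x : R}
    (hx : x ∈ TwoSidedIdeal.span s) : φ x = 0 :=
  (TwoSidedIdeal.mem_ker φ).mp <|
    TwoSidedIdeal.mem_span_iff.mp hx (TwoSidedIdeal.ker φ)
      (fun y hy => (TwoSidedIdeal.mem_ker φ).mpr (h y hy))

end F2Aux

open F2Aux

section Main

variable (K : Type) [Field K]

private lemma aba_mem :
    gen K .α * gen K .β * gen K .α ∈ TwoSidedIdeal.span
      {gen K .α * gen K .β - gen K .α * gen K .δ * gen K .γ * gen K .β,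
       gen K .ξ * gen K .ε,
       gen K .γ * gen K .δ,
       gen K .β * gen K .α + gen K .δ * gen K .γ + gen K .ε * gen K .ξ} := by
  set A := gen K .α; set B := gen K .β; set G := gen K .γ
  set D := gen K .δ; set E := gen K .ε; set X := gen K .ξ
  set J := TwoSidedIdeal.span
      {A * B - A * D * G * B, X * E, G * D, B * A + D * G + E * X} with hJ
  have h1 : A * B - A * D * G * B ∈ J := TwoSidedIdeal.subset_span (by simp)
  have h2 : X * E ∈ J := TwoSidedIdeal.subset_span (by simp)
  have h3 : G * D ∈ J := TwoSidedIdeal.subset_span (by simp)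
  have h4 : B * A + D * G + E * X ∈ J := TwoSidedIdeal.subset_span (by simp)
  have key : A * B * A =
      (A * B - A * D * G * B) * A
      + (A * B - A * D * G * B) * (A * E * X)
      + A * E * (X * E) * X
      - A * D * G * E * (X * E) * X
      - A * D * (G * D) * G
      - A * D * (G * D) * (G * E * X)
      - A * ((B * A + D * G + E * X) * (E * X))
      + A * D * G * (B * A + D * G + E * X)
      + A * D * G * ((B * A + D * G + E * X) * (E * X)) := by
    simp only [mul_sub, sub_mul]
    noncomm_ring
  rw [key]
  exact J.add_mem (J.add_mem (J.sub_mem (J.sub_mem (J.sub_mem (J.sub_mem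
    (J.add_mem (J.add_mem
      (J.mul_mem_right _ _ h1)
      (J.mul_mem_right _ _ h1))
      (J.mul_mem_right _ _ (J.mul_mem_left _ _ h2)))
      (J.mul_mem_right _ _ (J.mul_mem_left _ _ h2)))
      (J.mul_mem_right _ _ (J.mul_mem_left _ _ h3)))
      (J.mul_mem_right _ _ (J.mul_mem_left _ _ h3)))
      (J.mul_mem_left _ _ (J.mul_mem_right _ _ h4)))
      (J.mul_mem_left _ _ h4))
      (J.mul_mem_left _ _ (J.mul_mem_right _ _ h4))

private lemma bab_mem :
    gen K .β * gen K .α * gen K .β ∈ TwoSidedIdeal.span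
      {gen K .α * gen K .β - gen K .α * gen K .δ * gen K .γ * gen K .β,
       gen K .ξ * gen K .ε,
       gen K .γ * gen K .δ,
       gen K .β * gen K .α + gen K .δ * gen K .γ + gen K .ε * gen K .ξ} := by
  set A := gen K .α; set B := gen K .β; set G := gen K .γ
  set D := gen K .δ; set E := gen K .ε; set X := gen K .ξ
  set J := TwoSidedIdeal.span
      {A * B - A * D * G * B, X * E, G * D, B * A + D * G + E * X} with hJ
  have h1 : A * B - A * D * G * B ∈ J := TwoSidedIdeal.subset_span (by simp)
  have h2 : X * E ∈ J := TwoSidedIdeal.subset_span (by simp)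
  have h3 : G * D ∈ J := TwoSidedIdeal.subset_span (by simp)
  have h4 : B * A + D * G + E * X ∈ J := TwoSidedIdeal.subset_span (by simp)
  have key : B * A * B =
      B * (A * B - A * D * G * B)
      - B * A * B * (A * B - A * D * G * B)
      - D * G * B * (A * B - A * D * G * B)
      + E * (X * E) * (X * B)
      - E * (X * E) * (X * D * G * B)
      - D * (G * D) * (G * B)
      + D * (G * D) * (G * D * G * B)
      + B * A * D * (G * D) * (G * B)
      - (B * A + D * G + E * X) * (E * X * B)
      + (B * A + D * G + E * X) * (E * X * D * G * B)
      + B * A * (B * A + D * G + E * X) * B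
      - B * A * (B * A + D * G + E * X) * (D * G * B)
      + D * G * (B * A + D * G + E * X) * B
      - D * G * (B * A + D * G + E * X) * (D * G * B) := by
    simp only [mul_sub, sub_mul]
    noncomm_ring
  rw [key]
  exact J.sub_mem (J.add_mem (J.sub_mem (J.add_mem (J.add_mem (J.sub_mem
    (J.add_mem (J.add_mem (J.sub_mem (J.sub_mem (J.add_mem (J.sub_mem
    (J.sub_mem
      (J.mul_mem_left _ _ h1)
      (J.mul_mem_left _ _ h1))
      (J.mul_mem_left _ _ h1))
      (J.mul_mem_right _ _ (J.mul_mem_left _ _ h2)))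
      (J.mul_mem_right _ _ (J.mul_mem_left _ _ h2)))
      (J.mul_mem_right _ _ (J.mul_mem_left _ _ h3)))
      (J.mul_mem_right _ _ (J.mul_mem_left _ _ h3)))
      (J.mul_mem_right _ _ (J.mul_mem_left _ _ h3)))
      (J.mul_mem_right _ _ h4))
      (J.mul_mem_right _ _ h4))
      (J.mul_mem_right _ _ (J.mul_mem_left _ _ h4)))
      (J.mul_mem_right _ _ (J.mul_mem_left _ _ h4)))
      (J.mul_mem_right _ _ (J.mul_mem_left _ _ h4)))
      (J.mul_mem_right _ _ (J.mul_mem_left _ _ h4))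

end Main

/-- The set `f² = {αβ − αδγβ, ξε, γδ, βα + δγ + εξ}` is a minimal set of
generators of the ideal `I` (the two-sided ideal of `KQ` generated by
`αβ − αδγβ, ξε, γδ, βα + δγ + εξ, αβα, βαβ`, so that `A₂ = KQ/I`): the two-sided ideal
generated by `f²` equals `I`, and no proper subset of `f²` generates `I`.
(Paths are written from left to right.) -/
theorem f2_minimal_generators_A2 (K : Type) [Field K] [IsAlgClosed K] [CharP K 2] :
    letI f2 : Set (PathAlg K) :=
      {gen K .α * gen K .β - gen K .α * gen K .δ * gen K .γ * gen K .β,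
       gen K .ξ * gen K .ε,
       gen K .γ * gen K .δ,
       gen K .β * gen K .α + gen K .δ * gen K .γ + gen K .ε * gen K .ξ}
    letI I : TwoSidedIdeal (PathAlg K) :=
      TwoSidedIdeal.span
        {gen K .α * gen K .β - gen K .α * gen K .δ * gen K .γ * gen K .β,
         gen K .ξ * gen K .ε,
         gen K .γ * gen K .δ,
         gen K .β * gen K .α + gen K .δ * gen K .γ + gen K .ε * gen K .ξ,
         gen K .α * gen K .β * gen K .α,
         gen K .β * gen K .α * gen K .β}
    TwoSidedIdeal.span f2 = I ∧ ∀ t : Set (PathAlg K), t ⊂ f2 → TwoSidedIdeal.span t ≠ I := by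
  constructor
  · -- span f2 = I
    apply le_antisymm
    · intro w hw
      refine TwoSidedIdeal.mem_span_iff.mp hw _ ?_
      intro y hy
      refine TwoSidedIdeal.subset_span ?_
      simp only [Set.mem_insert_iff, Set.mem_singleton_iff] at hy ⊢
      tauto
    · intro w hw
      refine TwoSidedIdeal.mem_span_iff.mp hw _ ?_
      intro y hy
      simp only [Set.mem_insert_iff, Set.mem_singleton_iff] at hy
      rcases hy with rfl|rfl|rfl|rfl|rfl|rfl
      · exact TwoSidedIdeal.subset_span (by simp)
      · exact TwoSidedIdeal.subset_span (by simp)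
      · exact TwoSidedIdeal.subset_span (by simp)
      · exact TwoSidedIdeal.subset_span (by simp)
      · exact aba_mem K
      · exact bab_mem K
  · -- minimality
    intro t ht hEq
    obtain ⟨z, hz4, hzt⟩ := Set.exists_of_ssubset ht
    have hzI : z ∈ TwoSidedIdeal.span t := by
      rw [hEq]
      refine TwoSidedIdeal.subset_span ?_
      have hz4' := hz4
      simp only [Set.mem_insert_iff, Set.mem_singleton_iff] at hz4' ⊢
      tauto
    simp only [Set.mem_insert_iff, Set.mem_singleton_iff] at hz4
    have hts : ∀ y ∈ t, (y ∈ ({gen K .α * gen K .β - gen K .α * gen K .δ * gen K .γ * gen K .β,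
       gen K .ξ * gen K .ε,
       gen K .γ * gen K .δ,
       gen K .β * gen K .α + gen K .δ * gen K .γ + gen K .ε * gen K .ξ} : Set (PathAlg K))) ∧ y ≠ z := fun y hy =>
      ⟨ht.1 hy, fun h => hzt (h ▸ hy)⟩
    rcases hz4 with rfl|rfl|rfl|rfl
    · -- z = αβ − αδγβ : use φ1
      have h0 : ∀ y ∈ t, (φ1 K) y = 0 := by
        intro y hy
        obtain ⟨hy4, hne⟩ := hts y hy
        simp only [Set.mem_insert_iff, Set.mem_singleton_iff] at hy4
        rcases hy4 with rfl|rfl|rfl|rfl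
        · exact absurd rfl hne
        · simp [m1]
        · simp [m1]
        · simp [m1]
      have := span_eval_zero (φ1 K) h0 hzI
      simp only [map_sub, map_mul, φ1_gen] at this
      simp only [m1, mul_zero, zero_mul, sub_zero] at this
      exact UVne K this
    · -- z = ξε : use φ2
      have h0 : ∀ y ∈ t, (φ2 K) y = 0 := by
        intro y hy
        obtain ⟨hy4, hne⟩ := hts y hy
        simp only [Set.mem_insert_iff, Set.mem_singleton_iff] at hy4
        rcases hy4 with rfl|rfl|rfl|rfl
        · simp [m2]
        · exact absurd rfl hne
        · simp [m2]
        · simp [m2]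
      have := span_eval_zero (φ2 K) h0 hzI
      simp only [map_mul, φ2_gen] at this
      simp only [m2] at this
      exact UVne K this
    · -- z = γδ : use φ3
      have h0 : ∀ y ∈ t, (φ3 K) y = 0 := by
        intro y hy
        obtain ⟨hy4, hne⟩ := hts y hy
        simp only [Set.mem_insert_iff, Set.mem_singleton_iff] at hy4
        rcases hy4 with rfl|rfl|rfl|rfl
        · simp [m3]
        · simp [m3]
        · exact absurd rfl hne
        · simp [m3]
      have := span_eval_zero (φ3 K) h0 hzI
      simp only [map_mul, φ3_gen] at this
      simp only [m3] at this
      exact UVne K this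
    · -- z = βα + δγ + εξ : use φ4
      have h0 : ∀ y ∈ t, (φ4 K) y = 0 := by
        intro y hy
        obtain ⟨hy4, hne⟩ := hts y hy
        simp only [Set.mem_insert_iff, Set.mem_singleton_iff] at hy4
        rcases hy4 with rfl|rfl|rfl|rfl
        · simp [m4]
        · simp [m4]
        · simp [m4]
        · exact absurd rfl hne
      have := span_eval_zero (φ4 K) h0 hzI
      simp only [map_add, map_mul, φ4_gen] at this
      simp only [m4, mul_zero, zero_mul, add_zero, zero_add] at this
      exact UVne K this
end PathAlgD4
end

section
/- In the path algebra KQ over a field K of characteristic 2, with g²₁ = αβ, g²₂ = ξε, g²₃ = γδ, g²₄ = βα + δγ + εξ, the following identity holds: g²₁·αεξβ = α·g²₄·εξβ + αδγ·g²₄·β + αδγβ·g²₁ + αδ·g²₃·γβ + αε·g²₂·ξβ. -/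
namespace PathAlgD4

open QGen

variable (K : Type) [Field K]

open PathAlgD4

/-- In the path algebra `KQ` over a field `K` of characteristic `2`, with
`g²₁ = αβ`, `g²₂ = ξε`, `g²₃ = γδ`, `g²₄ = βα + δγ + εξ` (the minimal relations of the
preprojective algebra `A₁ = KQ/I′` of type `D₄`), the identity
`g²₁·αεξβ = α·g²₄·εξβ + αδγ·g²₄·β + αδγβ·g²₁ + αδ·g²₃·γβ + αε·g²₂·ξβ`
holds (paths written from left to right). -/
theorem f3_one_identity_A1 (K : Type) [Field K] [CharP K 2] :
    letI g21 : PathAlg K := gen K .α * gen K .β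
    letI g22 : PathAlg K := gen K .ξ * gen K .ε
    letI g23 : PathAlg K := gen K .γ * gen K .δ
    letI g24 : PathAlg K :=
      gen K .β * gen K .α + gen K .δ * gen K .γ + gen K .ε * gen K .ξ
    g21 * (gen K .α * gen K .ε * gen K .ξ * gen K .β) =
      gen K .α * g24 * (gen K .ε * gen K .ξ * gen K .β) +
        (gen K .α * gen K .δ * gen K .γ) * g24 * gen K .β +
        (gen K .α * gen K .δ * gen K .γ * gen K .β) * g21 +
        (gen K .α * gen K .δ) * g23 * (gen K .γ * gen K .β) +
        (gen K .α * gen K .ε) * g22 * (gen K .ξ * gen K .β) := by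
  have h2 : ∀ y : PathAlg K, y + y = 0 := by
    intro y
    have h0 : (2 : PathAlg K) = 0 := by
      rw [show (2 : PathAlg K) = algebraMap K (PathAlg K) 2 from (map_ofNat _ 2).symm,
        show (2 : K) = 0 from CharTwo.two_eq_zero, map_zero]
    calc y + y = 2 * y := (two_mul y).symm
    _ = 0 := by rw [h0, zero_mul]
  set a := gen K .α
  set b := gen K .β
  set c := gen K .γ
  set d := gen K .δ
  set e := gen K .ε
  set x := gen K .ξ
  have key :
      a * (b*a + d*c + e*x) * (e * x * b) +
        (a * d * c) * (b*a + d*c + e*x) * b +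
        (a * d * c * b) * (a * b) +
        (a * d) * (c * d) * (c * b) +
        (a * e) * (x * e) * (x * b)
      = a * b * (a * e * x * b) +
        ((a*d*c*e*x*b + a*d*c*e*x*b) +
         (a*e*x*e*x*b + a*e*x*e*x*b) +
         (a*d*c*b*a*b + a*d*c*b*a*b) +
         (a*d*c*d*c*b + a*d*c*d*c*b)) := by
    noncomm_ring
  rw [key]
  simp only [h2, add_zero]
end PathAlgD4
end

section
/- In the path algebra KQ over a field K of characteristic 2, with g²₁ = αβ, g²₂ = ξε, g²₃ = γδ, g²₄ = βα + δγ + εξ, the following identity holds: g²₄·βαδγ = β·g²₁·αδγ + δ·g²₃·γεξ + ε·g²₂·ξδγ + δγ·g²₄·εξ + εξ·g²₄·δγ + δγβ·g²₁·α + δγε·g²₂·ξ + εξδ·g²₃·γ + δγβα·g²₄. -/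
namespace PathAlgD4

open QGen

variable (K : Type) [Field K]

private lemma char_two_ring_identity {R : Type*} [Ring R]
    (h2 : ∀ x : R, x + x = 0) (a b c d e f : R) :
    (b * a + d * c + e * f) * (b * a * d * c) =
      b * (a * b) * (a * d * c) +
        d * (c * d) * (c * e * f) +
        e * (f * e) * (f * d * c) +
        (d * c) * (b * a + d * c + e * f) * (e * f) +
        (e * f) * (b * a + d * c + e * f) * (d * c) +
        (d * c * b) * (a * b) * a +
        (d * c * e) * (f * e) * f +
        (e * f * d) * (c * d) * c +
        (d * c * b * a) * (b * a + d * c + e * f) := by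
  have key :
      b * (a * b) * (a * d * c) +
        d * (c * d) * (c * e * f) +
        e * (f * e) * (f * d * c) +
        (d * c) * (b * a + d * c + e * f) * (e * f) +
        (e * f) * (b * a + d * c + e * f) * (d * c) +
        (d * c * b) * (a * b) * a +
        (d * c * e) * (f * e) * f +
        (e * f * d) * (c * d) * c +
        (d * c * b * a) * (b * a + d * c + e * f) =
      (b * a + d * c + e * f) * (b * a * d * c) +
        ((d*c*d*c*e*f + d*c*d*c*e*f) + (e*f*e*f*d*c + e*f*e*f*d*c) +
         (d*c*b*a*e*f + d*c*b*a*e*f) + (d*c*e*f*e*f + d*c*e*f*e*f) +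
         (e*f*d*c*d*c + e*f*d*c*d*c) + (d*c*b*a*b*a + d*c*b*a*b*a)) := by
    simp only [mul_add, add_mul, mul_assoc]; abel
  rw [key, h2 (d*c*d*c*e*f), h2 (e*f*e*f*d*c), h2 (d*c*b*a*e*f),
    h2 (d*c*e*f*e*f), h2 (e*f*d*c*d*c), h2 (d*c*b*a*b*a)]
  simp only [mul_add, add_mul, mul_assoc]; abel

open PathAlgD4

/-- In the path algebra `KQ` over a field `K` of characteristic `2`, with
`g²₁ = αβ`, `g²₂ = ξε`, `g²₃ = γδ`, `g²₄ = βα + δγ + εξ` (the minimal relations of the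
preprojective algebra `A₁ = KQ/I′` of type `D₄`), the identity
`g²₄·βαδγ = β·g²₁·αδγ + δ·g²₃·γεξ + ε·g²₂·ξδγ + δγ·g²₄·εξ + εξ·g²₄·δγ + δγβ·g²₁·α
  + δγε·g²₂·ξ + εξδ·g²₃·γ + δγβα·g²₄`
holds (paths written from left to right). -/
theorem f3_four_identity_A1 (K : Type) [Field K] [CharP K 2] :
    letI g21 : PathAlg K := gen K .α * gen K .β
    letI g22 : PathAlg K := gen K .ξ * gen K .ε
    letI g23 : PathAlg K := gen K .γ * gen K .δ
    letI g24 : PathAlg K :=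
      gen K .β * gen K .α + gen K .δ * gen K .γ + gen K .ε * gen K .ξ
    g24 * (gen K .β * gen K .α * gen K .δ * gen K .γ) =
      gen K .β * g21 * (gen K .α * gen K .δ * gen K .γ) +
        gen K .δ * g23 * (gen K .γ * gen K .ε * gen K .ξ) +
        gen K .ε * g22 * (gen K .ξ * gen K .δ * gen K .γ) +
        (gen K .δ * gen K .γ) * g24 * (gen K .ε * gen K .ξ) +
        (gen K .ε * gen K .ξ) * g24 * (gen K .δ * gen K .γ) +
        (gen K .δ * gen K .γ * gen K .β) * g21 * gen K .α +
        (gen K .δ * gen K .γ * gen K .ε) * g22 * gen K .ξ +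
        (gen K .ε * gen K .ξ * gen K .δ) * g23 * gen K .γ +
        (gen K .δ * gen K .γ * gen K .β * gen K .α) * g24 := by
  have h2K : (2 : K) = 0 := by
    have := CharP.cast_eq_zero K 2
    simpa using this
  have h2 : ∀ x : PathAlg K, x + x = 0 := by
    intro x
    rw [← two_mul, ← map_ofNat (algebraMap K (PathAlg K)) 2, h2K, map_zero, zero_mul]
  exact char_two_ring_identity h2 (gen K .α) (gen K .β) (gen K .γ) (gen K .δ)
    (gen K .ε) (gen K .ξ)
end PathAlgD4
end
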